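/- Let S(A) = {a_n} be an independent Stanley sequence, let k ≥ κ(A), set c = a_{2^k} and A_k = {a_0, a_1, ..., a_{2^k − 1}}, and suppose a_{2^k − 1} ≥ λ(A) + ω(A). Then for all integers x < y, the sets A_k + x and A_k + y jointly cover every integer in the set ([2y − x, c + 2y − x) \ (O(A) + 2y − x)) ∪ (O(A) + c + 2y − x). -/

import Mathlib

/-- A set of integers is 3-free if it contains no 3-term arithmetic progression. -/
def ThreeFreeSet (S : Set ℤ) : Prop :=
  ∀ x ∈ S, ∀ y ∈ S, ∀ z ∈ S, x < y → y < z → x + z ≠ 2 * y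

/-- `a` is the Stanley sequence generated greedily from the finite 3-free set `A`
of nonnegative integers containing 0: `a` first enumerates `A` in increasing order,
and for `n ≥ |A|`, `a n` is the least integer exceeding `a (n-1)` keeping the
set of terms so far 3-free. -/
def IsStanleySeq (A : Finset ℤ) (a : ℕ → ℤ) : Prop :=
  (0 : ℤ) ∈ A ∧ (∀ x ∈ A, 0 ≤ x) ∧ ThreeFreeSet ↑A ∧
  StrictMono a ∧ (∀ i < A.card, a i ∈ A) ∧
  ∀ n, A.card ≤ n →
    IsLeast {m : ℤ | a (n - 1) < m ∧ ThreeFreeSet (a '' Set.Iio n ∪ {m})} (a n)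

/-- The two defining conditions of an independent Stanley sequence,
for a given λ and κ. -/
def IndepParams (a : ℕ → ℤ) (lam : ℤ) (κ : ℕ) : Prop :=
  ∀ k, κ ≤ k →
    (∀ i < 2 ^ k, a (2 ^ k + i) = a (2 ^ k) + a i) ∧
    a (2 ^ k) = 2 * a (2 ^ k - 1) + 1 - lam

/-- A Stanley sequence is independent if `IndepParams` holds for some λ and κ. -/
def Independent (a : ℕ → ℤ) : Prop := ∃ lam κ, IndepParams a lam κ

/-- κ(A): the minimal κ witnessing independence. -/
noncomputable def kappa (a : ℕ → ℤ) : ℕ := sInf {κ | ∃ lam, IndepParams a lam κ}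

/-- λ(A), recovered from the defining equation at k = κ(A). -/
noncomputable def lambdaA (a : ℕ → ℤ) : ℤ :=
  2 * a (2 ^ kappa a - 1) + 1 - a (2 ^ kappa a)

/-- The repeat factor ρ(A) = a_{2^{κ(A)}}. -/
noncomputable def rho (a : ℕ → ℤ) : ℤ := a (2 ^ kappa a)

/-- The scaling factor α(A), satisfying a_{2^k} = α·3^k for all k ≥ κ(A). -/
noncomputable def scalingFactor (a : ℕ → ℤ) : ℚ :=
  (a (2 ^ kappa a) : ℚ) / 3 ^ kappa a

/-- An integer `x` is covered by a set `S` if there are `y < z < x` in `S`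
with `y, z, x` in arithmetic progression. -/
def Covers (S : Set ℤ) (x : ℤ) : Prop :=
  ∃ y z, y ∈ S ∧ z ∈ S ∧ y < z ∧ z < x ∧ 2 * z = y + x

/-- An integer `x` is jointly covered by `S` and `T` if there are `y < z < x`
with `y ∈ S`, `z ∈ T`, and `y, z, x` in arithmetic progression. -/
def JointlyCovers (S T : Set ℤ) (x : ℤ) : Prop :=
  ∃ y z, y ∈ S ∧ z ∈ T ∧ y < z ∧ z < x ∧ 2 * z = y + x

/-- O(A): nonnegative integers neither in the Stanley sequence nor covered by it. -/
def OSet (a : ℕ → ℤ) : Set ℤ :=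
  {x | 0 ≤ x ∧ x ∉ Set.range a ∧ ¬ Covers (Set.range a) x}

/-- ω(A): the maximum element of O(A). -/
noncomputable def omegaA (a : ℕ → ℤ) : ℤ := sSup (OSet a)

/-- The translate `S + t` of a set of integers. -/
def shift (S : Set ℤ) (t : ℤ) : Set ℤ := (· + t) '' S

/-- A triadic number: a rational whose denominator in lowest terms is a power of 3. -/
def IsTriadic (q : ℚ) : Prop := ∃ j : ℕ, q.den = 3 ^ j

/-!
Write `z = w + (2y − x)`. Whenever `w` lies in `A_k` or is covered by `A_k`, shifting the
witnesses by `x` and `y` gives a joint cover of `z`. For `w ∈ [0, c) \ O(A)` this is the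
definition of `O(A)`, since terms of `S(A)` below `c` lie in `A_k`. For `w ∈ O(A)` we show that
`c + w` is covered by `A_k`: it exceeds `ω(A)` and is not a term, because `S(A) ∩ [c, 3c)` is
`A_k ∪ (A_k + c)`, so it is covered by `S(A)`. A covering pair inside `A_k + c` would cover `w`,
and a pair with one term in each block is excluded by `a_{2^k−1} + ω(A) < c`, which is the
hypothesis `a_{2^k−1} ≥ λ + ω(A)` rewritten with `c = 2a_{2^k−1} + 1 − λ`.
-/

open Set

theorem ThreeFreeSet.union_singleton {S : Set ℤ} {w : ℤ} (hS : ThreeFreeSet S)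
    (hlt : ∀ s ∈ S, s < w) (hw : ¬ Covers S w) : ThreeFreeSet (S ∪ {w}) := by
  rintro x hx y hy z hz hxy hyz hsum
  have hle : ∀ u ∈ S ∪ {w}, u ≤ w := fun u hu => hu.elim (fun hu => (hlt u hu).le) le_of_eq
  have hzw := hle z hz
  have hxS : x ∈ S := hx.resolve_right ((hxy.trans hyz).trans_le hzw).ne
  have hyS : y ∈ S := hy.resolve_right (hyz.trans_le hzw).ne
  rcases hz with hzS | (rfl : z = w)
  · exact hS x hxS y hyS z hzS hxy hyz hsum
  · exact hw ⟨x, y, hxS, hyS, hxy, hyz, by omega⟩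

theorem Covers.mono {S T : Set ℤ} {w : ℤ} (h : Covers S w) (hST : S ⊆ T) : Covers T w :=
  let ⟨p, q, hp, hq, hpq, hqw, hsum⟩ := h
  ⟨p, q, hST hp, hST hq, hpq, hqw, hsum⟩

theorem jointlyCovers_shift {S : Set ℤ} {w x y : ℤ} (hxy : x < y) (hw : w ∈ S ∨ Covers S w) :
    JointlyCovers (shift S x) (shift S y) (w + (2 * y - x)) := by
  rcases hw with hw | ⟨p, q, hp, hq, hpq, hqw, hsum⟩
  · exact ⟨w + x, w + y, ⟨w, hw, rfl⟩, ⟨w, hw, rfl⟩, by omega, by omega, by omega⟩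
  · exact ⟨p + x, q + y, ⟨p, hp, rfl⟩, ⟨q, hq, rfl⟩, by omega, by omega, by omega⟩

section StrictMono

variable {a : ℕ → ℤ} (hmono : StrictMono a)
include hmono

theorem StrictMono.mem_image_Iio {v : ℤ} {n : ℕ} (hv : v ∈ range a) (hvn : v < a n) :
    v ∈ a '' Iio n := by
  obtain ⟨m, rfl⟩ := hv
  exact ⟨m, hmono.lt_iff_lt.1 hvn, rfl⟩

theorem StrictMono.mem_or_covers_image_Iio {w : ℤ} {n : ℕ} (h0 : 0 ≤ w) (hwn : w < a n)
    (hw : w ∉ OSet a) : w ∈ a '' Iio n ∨ Covers (a '' Iio n) w := by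
  have hcases : w ∈ range a ∨ Covers (range a) w := by
    by_contra! h
    exact hw ⟨h0, h.1, h.2⟩
  rcases hcases with hr | ⟨p, q, hp, hq, hpq, hqw, hsum⟩
  · exact .inl (hmono.mem_image_Iio hr hwn)
  · exact .inr ⟨p, q, hmono.mem_image_Iio hp (by omega), hmono.mem_image_Iio hq (by omega),
      hpq, hqw, hsum⟩

end StrictMono

namespace IsStanleySeq

variable {A : Finset ℤ} {a : ℕ → ℤ} (hA : IsStanleySeq A a)
include hA

theorem strictMono : StrictMono a := hA.2.2.2.1

theorem nonneg (n : ℕ) : 0 ≤ a n := by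
  obtain ⟨hA0, hApos, -, hmono, hmem, -⟩ := hA
  exact (hApos _ (hmem 0 (Finset.card_pos.2 ⟨0, hA0⟩))).trans (hmono.monotone n.zero_le)

theorem threeFree_image_Iio (n : ℕ) : ThreeFreeSet (a '' Iio n) := by
  obtain ⟨-, -, hAfree, -, hmem, hgreedy⟩ := hA
  rcases le_or_gt n A.card with hn | hn
  · rintro _ ⟨i, hi, rfl⟩ _ ⟨j, hj, rfl⟩ _ ⟨l, hl, rfl⟩
    exact hAfree _ (hmem i (hi.trans_le hn)) _ (hmem j (hj.trans_le hn))
      _ (hmem l (hl.trans_le hn))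
  · obtain ⟨m, rfl⟩ : ∃ m, n = m + 1 := ⟨n - 1, by omega⟩
    have hIio : a '' Iio (m + 1) = a '' Iio m ∪ {a m} := by
      rw [← Order.succ_eq_add_one, Order.Iio_succ_eq_insert, image_insert_eq, union_singleton]
    rw [hIio]
    exact (hgreedy m (by omega)).1.2

-- A larger `w` would have been an admissible greedy choice before the first term exceeding it.
theorem lt_of_mem_OSet {w : ℤ} (hw : w ∈ OSet a) : w < a (A.card - 1) := by
  obtain ⟨-, hwr, hwc⟩ := hw
  by_contra! hle
  have hmono := hA.strictMono
  have hex : ∃ n, w < a n := by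
    simpa using not_bddAbove_iff.1 hmono.not_bddAbove_range_of_isSuccArchimedean w
  classical
  set N := Nat.find hex
  have hwN : w < a N := Nat.find_spec hex
  have hcard : A.card ≤ N := by
    by_contra!
    exact (hmono.monotone (Nat.le_sub_one_of_lt this)).not_gt (hle.trans_lt hwN)
  have hbelow : ∀ s ∈ a '' Iio N, s < w := by
    rintro _ ⟨m, hm, rfl⟩
    exact (not_lt.1 (Nat.find_min hex hm)).lt_of_ne fun h => hwr ⟨m, h⟩
  have hfree : ThreeFreeSet (a '' Iio N ∪ {w}) :=
    (hA.threeFree_image_Iio N).union_singleton hbelow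
      fun h => hwc (h.mono (image_subset_range _ _))
  have hprev : a (N - 1) < w :=
    hbelow _ ⟨N - 1, Nat.sub_one_lt_of_lt ((Finset.card_pos.2 ⟨0, hA.1⟩).trans_le hcard), rfl⟩
  exact hwN.not_ge ((hA.2.2.2.2.2 N hcard).2 ⟨hprev, hfree⟩)

theorem bddAbove_OSet : BddAbove (OSet a) :=
  ⟨a (A.card - 1), fun _ hw => (hA.lt_of_mem_OSet hw).le⟩

end IsStanleySeq

theorem Independent.indepParams_lambdaA {a : ℕ → ℤ} (hInd : Independent a) :
    IndepParams a (lambdaA a) (kappa a) := by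
  obtain ⟨lam, κ, h⟩ := hInd
  obtain ⟨lam', h'⟩ : ∃ lam', IndepParams a lam' (kappa a) :=
    Nat.sInf_mem (s := {κ | ∃ lam, IndepParams a lam κ}) ⟨κ, lam, h⟩
  have hlam : lambdaA a = lam' := by
    have := (h' (kappa a) le_rfl).2
    unfold lambdaA
    omega
  rwa [hlam]

namespace IndepParams

variable {a : ℕ → ℤ} {lam : ℤ} {κ k : ℕ} (hP : IndepParams a lam κ) (hk : κ ≤ k)
include hP hk

theorem apply_two_pow_succ : a (2 ^ (k + 1)) = 3 * a (2 ^ k) := by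
  have hlast : a (2 ^ (k + 1) - 1) = a (2 ^ k) + a (2 ^ k - 1) := by
    have hidx : 2 ^ (k + 1) - 1 = 2 ^ k + (2 ^ k - 1) := by
      have := Nat.two_pow_pos k
      rw [pow_succ]
      omega
    rw [hidx, (hP k hk).1 _ (Nat.sub_lt (Nat.two_pow_pos k) one_pos)]
  have := (hP k hk).2
  rw [(hP (k + 1) (hk.trans k.le_succ)).2, hlast]
  omega

theorem mem_image_Iio_or_sub_mem_image_Iio (hmono : StrictMono a) {v : ℤ} (hv : v ∈ range a)
    (hv3 : v < 3 * a (2 ^ k)) : v ∈ a '' Iio (2 ^ k) ∨ v - a (2 ^ k) ∈ a '' Iio (2 ^ k) := by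
  obtain ⟨n, rfl⟩ := hv
  rcases lt_or_ge n (2 ^ k) with hn | hn
  · exact .inl ⟨n, hn, rfl⟩
  rcases lt_or_ge n (2 ^ (k + 1)) with hn' | hn'
  · have hblock := (hP k hk).1 (n - 2 ^ k) (by rw [pow_succ] at hn'; omega)
    rw [Nat.add_sub_cancel' hn] at hblock
    exact .inr ⟨n - 2 ^ k, by rw [pow_succ] at hn'; simp only [mem_Iio]; omega, by omega⟩
  · have := hmono.monotone hn'
    rw [hP.apply_two_pow_succ hk] at this
    omega

end IndepParams

theorem IsStanleySeq.covers_add_of_mem_OSet {A : Finset ℤ} {a : ℕ → ℤ} {lam : ℤ} {κ k : ℕ}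
    (hA : IsStanleySeq A a) (hP : IndepParams a lam κ) (hk : κ ≤ k)
    (hbound : lam + omegaA a ≤ a (2 ^ k - 1)) {w : ℤ} (hw : w ∈ OSet a) :
    Covers (a '' Iio (2 ^ k)) (a (2 ^ k) + w) := by
  have hmono := hA.strictMono
  set c := a (2 ^ k)
  have hc : c = 2 * a (2 ^ k - 1) + 1 - lam := (hP k hk).2
  have hbounds : ∀ v ∈ a '' Iio (2 ^ k), 0 ≤ v ∧ v ≤ a (2 ^ k - 1) := by
    rintro _ ⟨i, hi, rfl⟩
    exact ⟨hA.nonneg i, hmono.monotone (Nat.le_sub_one_of_lt hi)⟩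
  have hM := hA.nonneg (2 ^ k - 1)
  have hwω : w ≤ omegaA a := le_csSup hA.bddAbove_OSet hw
  obtain ⟨hw0, hwr, hwc⟩ := hw
  have hsplit {v : ℤ} (hv : v ∈ range a) (hv3 : v < 3 * c) :=
    hP.mem_image_Iio_or_sub_mem_image_Iio hk hmono hv hv3
  have hnot_range : c + w ∉ range a := by
    intro hv
    rcases hsplit hv (by omega) with hvB | hvB
    · have := hbounds _ hvB
      omega
    · obtain ⟨i, -, hi⟩ := hvB
      exact hwr ⟨i, by omega⟩
  have hcov : Covers (range a) (c + w) := by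
    by_contra h
    have : c + w ≤ omegaA a := le_csSup hA.bddAbove_OSet ⟨by omega, hnot_range, h⟩
    omega
  obtain ⟨p, q, hp, hq, hpq, hqw, hsum⟩ := hcov
  rcases hsplit hq (by omega) with hqB | hqB
  · have := hbounds q hqB
    exact ⟨p, q, hmono.mem_image_Iio hp (by omega), hqB, hpq, hqw, hsum⟩
  rcases hsplit hp (by omega) with hpB | hpB
  · -- one term in each block: excluded by `a (2 ^ k - 1) + ω(A) < c`
    have := hbounds p hpB
    have := hbounds _ hqB
    omega
  · exact absurd ⟨p - c, q - c, image_subset_range _ _ hpB, image_subset_range _ _ hqB,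
      by omega, by omega, by omega⟩ hwc

/-- Lemma 3.2(b): for `x < y`, the sets `A_k + x` and `A_k + y`
jointly cover `([2y−x, c+2y−x) \ (O(A) + 2y − x)) ∪ (O(A) + c + 2y − x)`. -/
theorem cover_part_b (A : Finset ℤ) (a : ℕ → ℤ)
    (hA : IsStanleySeq A a) (hInd : Independent a) (k : ℕ) (hk : kappa a ≤ k)
    (c : ℤ) (hc : c = a (2 ^ k))
    (Ak : Set ℤ) (hAk : Ak = a '' Set.Iio (2 ^ k))
    (hbound : lambdaA a + omegaA a ≤ a (2 ^ k - 1)) :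
    ∀ x y : ℤ, x < y →
      ∀ z ∈ (Set.Ico (2 * y - x) (c + 2 * y - x) \ shift (OSet a) (2 * y - x)) ∪
          shift (OSet a) (c + 2 * y - x),
        JointlyCovers (shift Ak x) (shift Ak y) z := by
  subst hc hAk
  intro x y hxy z hz
  rcases hz with ⟨⟨hz₁, hz₂⟩, hzO⟩ | ⟨w, hw, rfl⟩
  · have hw : z - (2 * y - x) ∉ OSet a := fun h => hzO ⟨_, h, sub_add_cancel _ _⟩
    have := jointlyCovers_shift hxy
      (hA.strictMono.mem_or_covers_image_Iio (n := 2 ^ k) (by omega) (by omega) hw)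
    rwa [sub_add_cancel] at this
  · have := jointlyCovers_shift hxy
      (.inr (hA.covers_add_of_mem_OSet hInd.indepParams_lambdaA hk hbound hw))
    convert this using 1
    ring
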